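/- Every 𝔟-generalized tower in [ℕ]^∞ is a Fin-scale: for each z ∈ [ℕ]^∞ there exists t ∈ [ℕ]^∞ such that z ≤^∞ t (meaning e_t(n) ≥ e_z(n) for infinitely many n, i.e., e_t ≤* e_z fails) and e_t ≤* e_x for all but fewer than 𝔟 elements x of the tower. -/

import Mathlib

open Set Filter

/-- Increasing enumeration of a subset of ℕ. -/
noncomputable def enum (x : Set ℕ) : ℕ → ℕ := Nat.nth (· ∈ x)

/-- `X ⊆ [ℕ]^∞` is a `κ`-generalized tower. -/
def IsGenTower (κ : Cardinal) (X : Set (Set ℕ)) : Prop :=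
  (∀ x ∈ X, x.Infinite) ∧ κ ≤ Cardinal.mk X ∧
  ∀ a : ℕ → ℕ, StrictMono a → ∃ b : Set ℕ, b.Infinite ∧
    ∃ S : Set (Set ℕ), S ⊆ X ∧ Cardinal.mk S < κ ∧
      ∀ x ∈ X \ S, (x ∩ ⋃ n ∈ b, Set.Ico (a n) (a (n + 1))).Finite

/-- The bounding number 𝔟: the minimal cardinality of an unbounded
family in `(ℕ → ℕ, ≤*)`. -/
noncomputable def bNum : Cardinal :=
  sInf {c | ∃ F : Set (ℕ → ℕ), Cardinal.mk F = c ∧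
    ∀ g : ℕ → ℕ, ∃ f ∈ F, {n | g n < f n}.Infinite}

/-!
Given `z`, pick a sequence `a` growing so fast that `e_z (a m) ≤ a (m + 1)`. The tower property
yields infinitely many intervals `[a n, a (n + 1))`, `n ∈ b`, which are missed, up to finitely many
points, by every `x ∈ X` outside a small set `S`. Enumerating `b` as `g 0 < g 1 < ⋯` and putting
`c i = a (g i)`, let `e_t` be the identity shifted up by `a (g i + 1) - c i` on `[c i, c (i + 1))`.
Then `e_t (c i) = a (g i + 1) ≥ e_z (c i)`, and once `x` misses `[c i, a (g i + 1))` its `c i`-th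
element is already `≥ a (g i + 1)`, which forces `e_t ≤ e_x` on the whole block.
-/

lemma Nat.nth_mem_range {f : ℕ → ℕ} (hf : StrictMono f) (n : ℕ) :
    Nat.nth (· ∈ range f) n = f n := by
  have hinf : (range f).Infinite := infinite_range_of_injective hf.injective
  have := Nat.nth_comp_of_strictMono (p := (· ∈ range f)) (n := n) hf (fun _ hk => hk)
    (fun hfin => absurd hfin hinf)
  simpa only [mem_range_self, Nat.nth_true] using this.symm

lemma enum_range {f : ℕ → ℕ} (hf : StrictMono f) : enum (range f) = f :=
  funext (Nat.nth_mem_range hf)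

lemma le_enum_of_disjoint_Ico {x : Set ℕ} (hx : x.Infinite) {c A k : ℕ}
    (hgap : Disjoint x (Ico c A)) (hk : c ≤ k) : A + (k - c) ≤ enum x k := by
  classical
  have hcount : Nat.count (· ∈ x) A ≤ c := by
    rw [Nat.count_eq_card_filter_range]
    refine (Finset.card_le_card fun m hm => ?_).trans (Finset.card_range c).le
    simp only [Finset.mem_filter, Finset.mem_range] at hm ⊢
    by_contra! hcm
    exact disjoint_left.mp hgap hm.2 ⟨hcm, hm.1⟩
  have hA : A ≤ enum x c := (Nat.count_le_iff_le_nth (p := (· ∈ x)) hx).mp hcount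
  have hshift := (Nat.nth_strictMono (p := (· ∈ x)) hx).add_le_nat (k - c) c
  rw [Nat.sub_add_cancel hk] at hshift
  rw [enum] at hA ⊢
  omega

section BlockIndex

variable {c : ℕ → ℕ}

/-- The index `i` of the block `[c i, c (i + 1))` containing `k`, and `0` when `k < c 0`. -/
def blockIndex (c : ℕ → ℕ) (k : ℕ) : ℕ := Nat.findGreatest (fun i => c i ≤ k) k

lemma blockIndex_mono (c : ℕ → ℕ) : Monotone (blockIndex c) :=
  fun _ _ hk => Nat.findGreatest_mono (fun _ hi => hi.trans hk) hk

lemma le_blockIndex (hc : StrictMono c) {i k : ℕ} (h : c i ≤ k) : i ≤ blockIndex c k :=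
  Nat.le_findGreatest (hc.le_apply.trans h) h

lemma apply_blockIndex_le {k : ℕ} (h : c 0 ≤ k) : c (blockIndex c k) ≤ k :=
  Nat.findGreatest_spec (P := fun i => c i ≤ k) (Nat.zero_le k) h

lemma blockIndex_apply (hc : StrictMono c) (i : ℕ) : blockIndex c (c i) = i :=
  le_antisymm (hc.le_iff_le.mp (apply_blockIndex_le (hc.monotone (Nat.zero_le i))))
    (le_blockIndex hc le_rfl)

def blockShift (c d : ℕ → ℕ) (k : ℕ) : ℕ := k + d (blockIndex c k)

variable {d : ℕ → ℕ}

lemma blockShift_strictMono (hd : Monotone d) : StrictMono (blockShift c d) :=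
  strictMono_id.add_monotone (hd.comp (blockIndex_mono c))

lemma blockShift_apply (hc : StrictMono c) (i : ℕ) : blockShift c d (c i) = c i + d i := by
  rw [blockShift, blockIndex_apply hc]

lemma eventually_blockShift_le_enum (hc : StrictMono c) {x : Set ℕ} (hx : x.Infinite)
    (hgap : ∀ᶠ i in atTop, Disjoint x (Ico (c i) (c i + d i))) :
    ∀ᶠ k in atTop, blockShift c d k ≤ enum x k := by
  obtain ⟨N, hN⟩ := eventually_atTop.mp hgap
  filter_upwards [eventually_ge_atTop (c N)] with k hk
  have hNi : N ≤ blockIndex c k := le_blockIndex hc hk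
  have hck : c (blockIndex c k) ≤ k :=
    apply_blockIndex_le ((hc.monotone (Nat.zero_le N)).trans hk)
  have := le_enum_of_disjoint_Ico hx (hN _ hNi) hck
  rw [blockShift]
  omega

end BlockIndex

-- The factor `2` makes the gaps `a m + u (a m) + 1` increasing when `u` is monotone.
def dominatingSeq (u : ℕ → ℕ) : ℕ → ℕ
  | 0 => 0
  | m + 1 => 2 * dominatingSeq u m + u (dominatingSeq u m) + 1

lemma dominatingSeq_succ (u : ℕ → ℕ) (m : ℕ) :
    dominatingSeq u (m + 1) = 2 * dominatingSeq u m + u (dominatingSeq u m) + 1 := rfl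

lemma dominatingSeq_strictMono (u : ℕ → ℕ) : StrictMono (dominatingSeq u) :=
  strictMono_nat_of_lt_succ fun m => by rw [dominatingSeq_succ]; omega

lemma le_dominatingSeq_succ (u : ℕ → ℕ) (m : ℕ) :
    u (dominatingSeq u m) ≤ dominatingSeq u (m + 1) := by
  rw [dominatingSeq_succ]; omega

lemma dominatingSeq_gap_mono {u : ℕ → ℕ} (hu : Monotone u) :
    Monotone fun m => dominatingSeq u (m + 1) - dominatingSeq u m := by
  refine monotone_nat_of_le_succ fun m => ?_
  have hlt := dominatingSeq_strictMono u (Nat.lt_succ_self m)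
  have hle := hu hlt.le
  simp only [dominatingSeq_succ u (m + 1), dominatingSeq_succ u m] at hlt hle ⊢
  omega

/-- Every 𝔟-generalized tower is a `Fin`-scale. -/
theorem stmt5 (X : Set (Set ℕ)) (hX : IsGenTower bNum X) :
    ∀ z : Set ℕ, z.Infinite → ∃ t : Set ℕ, t.Infinite ∧
      {n | enum z n ≤ enum t n}.Infinite ∧
      ∃ S : Set (Set ℕ), S ⊆ X ∧ Cardinal.mk S < bNum ∧
        ∀ x ∈ X \ S, ∀ᶠ n in atTop, enum t n ≤ enum x n := by
  obtain ⟨hinf, -, htower⟩ := hX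
  intro z hz
  set a := dominatingSeq (enum z)
  obtain ⟨b, hb, S, hSX, hS, hfin⟩ := htower a (dominatingSeq_strictMono _)
  set g := Nat.nth (· ∈ b)
  have hg : StrictMono g := Nat.nth_strictMono hb
  set c := a ∘ g
  set d := fun i => a (g i + 1) - a (g i)
  have hc : StrictMono c := (dominatingSeq_strictMono _).comp hg
  have hd : Monotone d :=
    (dominatingSeq_gap_mono (Nat.nth_strictMono hz).monotone).comp hg.monotone
  have hcd : ∀ i, c i + d i = a (g i + 1) := fun i =>
    Nat.add_sub_cancel' (dominatingSeq_strictMono _ (Nat.lt_succ_self (g i))).le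
  have ht := blockShift_strictMono (c := c) hd
  refine ⟨range (blockShift c d), infinite_range_of_injective ht.injective, ?_, S, hSX, hS,
    fun x hx => ?_⟩ <;> rw [enum_range ht]
  · refine (infinite_range_of_injective hc.injective).mono ?_
    rintro _ ⟨i, rfl⟩
    rw [mem_ofPred_eq, blockShift_apply hc, hcd]
    exact le_dominatingSeq_succ _ (g i)
  · obtain ⟨N, hN⟩ := (hfin x hx).bddAbove
    refine eventually_blockShift_le_enum hc (hinf x hx.1) ?_
    filter_upwards [eventually_gt_atTop N] with i hi
    refine disjoint_left.mpr fun m hmx hm => ?_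
    rw [hcd] at hm
    have hmN : m ≤ N := hN ⟨hmx, mem_biUnion (Nat.nth_mem_of_infinite hb i) hm⟩
    have hic : i ≤ c i := hc.le_apply
    have hcm : c i ≤ m := hm.1
    omega
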